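/- arXiv:2308.11738 — 2 statements merged into one kernel-verified Lean document; each statement's English description precedes it below -/
import Mathlib

section
/- The number of labeled directed acyclic graphs on n ≥ 1 vertices satisfies the recurrence a_n = Σ_{m=1}^{n} (-1)^{m+1} · C(n,m) · 2^{m(n-m)} · a_{n-m}, with a_0 = 1. -/
/-- A directed graph (relation) is a DAG if it has no directed cycle,
i.e. its transitive closure is irreflexive. -/
def IsDag {V : Type*} (E : V → V → Prop) : Prop :=
  Irreflexive (Relation.TransGen E)

/-- The number of labeled DAGs on the vertex set `Fin n`. -/
noncomputable def numDag (n : ℕ) : ℕ :=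
  Nat.card {E : Fin n → Fin n → Bool // IsDag (fun u v => E u v = true)}

/-!
Inclusion–exclusion over the events "`v` is a source". Every DAG on a nonempty vertex set has a
source, so no DAG avoids all of these events, and the alternating sum over vertex sets `S` of the
number of DAGs in which every vertex of `S` is a source vanishes. Such a DAG is an arbitrary choice
of edges from `S` to its complement together with an arbitrary DAG on the complement, which gives
`2 ^ (m * (n - m)) * a (n - m)` DAGs when `#S = m`; the term `S = ∅` is `a n`.
-/

open Finset Relation

variable {V W α β : Type*}

theorem IsDag.comap {E : W → W → Prop} (h : IsDag E) (f : V → W) :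
    IsDag (fun u v => E (f u) (f v)) :=
  fun v hv => h (f v) (hv.lift f fun _ _ => id)

theorem IsDag.exists_source [Finite V] [Nonempty V] {E : V → V → Prop} (h : IsDag E) :
    ∃ v, ∀ u, ¬ E u v := by
  have : Std.Irrefl (TransGen E) := ⟨h⟩
  obtain ⟨v, -, hv⟩ :=
    (Finite.wellFounded_of_trans_of_irrefl (TransGen E)).has_min Set.univ Set.univ_nonempty
  exact ⟨v, fun u huv => hv u trivial (.single huv)⟩

abbrev Dag (V : Type*) := {E : V → V → Bool // IsDag (fun u v => E u v = true)}

namespace Dag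

def IsSource (E : Dag V) (v : V) : Prop := ∀ u, E.1 u v = false

def equivOfEquiv (e : V ≃ W) : Dag V ≃ Dag W where
  toFun E := ⟨fun u v => E.1 (e.symm u) (e.symm v), E.2.comap e.symm⟩
  invFun F := ⟨fun u v => F.1 (e u) (e v), F.2.comap e⟩
  left_inv E := by ext; simp
  right_inv F := by ext; simp

theorem isSource_equivOfEquiv (e : V ≃ W) (E : Dag V) (w : W) :
    (equivOfEquiv e E).IsSource w ↔ E.IsSource (e.symm w) :=
  (e.symm.surjective.forall (p := fun v => E.1 v (e.symm w) = false)).symm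

theorem card_eq_numDag [Fintype V] : Nat.card (Dag V) = numDag (Fintype.card V) :=
  Nat.card_congr (equivOfEquiv (Fintype.equivFin V))

def sumEdges (g : α → β → Bool) (F : β → β → Bool) : α ⊕ β → α ⊕ β → Bool
  | .inl a, .inr b => g a b
  | .inr b, .inr b' => F b b'
  | _, .inl _ => false

theorem isDag_sumEdges (g : α → β → Bool) {F : β → β → Bool}
    (hF : IsDag (fun u v => F u v = true)) : IsDag (fun u v => sumEdges g F u v = true) := by
  have stays_right {b : β} {y : α ⊕ β}
      (h : TransGen (fun u v => sumEdges g F u v = true) (.inr b) y) :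
      ∃ b', y = .inr b' ∧ TransGen (fun u v => F u v = true) b b' := by
    induction h with
    | @single y hy =>
      cases y with
      | inl => simp [sumEdges] at hy
      | inr b' => exact ⟨b', rfl, .single hy⟩
    | @tail y z _ hyz ih =>
      obtain ⟨c, rfl, hbc⟩ := ih
      cases z with
      | inl => simp [sumEdges] at hyz
      | inr b' => exact ⟨b', rfl, hbc.tail hyz⟩
  rintro (a | b) hx
  · obtain ⟨_, -, h⟩ := TransGen.tail'_iff.1 hx
    simp [sumEdges] at h
  · obtain ⟨_, ⟨⟩, hbb⟩ := stays_right hx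
    exact hF b hbb

def sourcesLeftEquiv :
    {E : Dag (α ⊕ β) // ∀ a, E.IsSource (.inl a)} ≃ (α → β → Bool) × Dag β where
  toFun E := (fun a b => E.1.1 (.inl a) (.inr b),
    ⟨fun b b' => E.1.1 (.inr b) (.inr b'), E.1.2.comap Sum.inr⟩)
  invFun p := ⟨⟨sumEdges p.1 p.2.1, isDag_sumEdges p.1 p.2.2⟩, fun a u => by cases u <;> rfl⟩
  left_inv E := by
    ext u v
    cases u <;> cases v <;> simp [sumEdges, E.2 _ _]
  right_inv p := rfl

theorem card_forall_mem_isSource [Fintype V] [DecidableEq V] (S : Finset V) :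
    Nat.card {E : Dag V // ∀ v ∈ S, E.IsSource v} =
      2 ^ (#S * (Fintype.card V - #S)) * numDag (Fintype.card V - #S) := by
  let e := Equiv.sumCompl (· ∈ S)
  have hsplit : {E : Dag V // ∀ v ∈ S, E.IsSource v} ≃
      {E : Dag (S ⊕ {v // v ∉ S}) // ∀ a, E.IsSource (.inl a)} :=
    (equivOfEquiv e.symm).subtypeEquiv fun E => by
      simp only [isSource_equivOfEquiv, Equiv.symm_symm]
      exact ⟨fun h a => h a a.2, fun h v hv => h ⟨v, hv⟩⟩
  rw [Nat.card_congr (hsplit.trans sourcesLeftEquiv), Nat.card_prod, card_eq_numDag]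
  simp [Fintype.card_subtype_compl, ← pow_mul, mul_comm]

end Dag

theorem alternating_sum_range_choose_mul_numDag {n : ℕ} (hn : n ≠ 0) :
    ∑ m ∈ range (n + 1),
      (-1 : ℤ) ^ m * n.choose m * 2 ^ (m * (n - m)) * numDag (n - m) = 0 := by
  classical
  have : NeZero n := ⟨hn⟩
  let A (v : Fin n) : Finset (Dag (Fin n)) := {E | E.IsSource v}
  have no_sourceless : univ.inf (fun v => (A v)ᶜ) = ∅ := by
    refine eq_empty_of_forall_notMem fun E hE => ?_
    obtain ⟨v, hv⟩ := E.2.exists_source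
    simp only [mem_inf, mem_univ, mem_compl, A, mem_filter, true_and, forall_const] at hE
    exact hE v fun u => by simpa using hv u
  have card_inf (t : Finset (Fin n)) :
      (#(t.inf A) : ℤ) = 2 ^ (#t * (n - #t)) * numDag (n - #t) := by
    have : t.inf A = univ.filter fun E => ∀ v ∈ t, E.IsSource v := by ext; simp [A, mem_inf]
    rw [this, ← Fintype.card_subtype, ← Nat.card_eq_fintype_card, Dag.card_forall_mem_isSource]
    simp
  have h := inclusion_exclusion_card_inf_compl univ A
  rw [no_sourceless, card_empty, Nat.cast_zero] at h
  simp_rw [card_inf] at h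
  rw [sum_powerset_apply_card (fun m => (-1 : ℤ) ^ m * (2 ^ (m * (n - m)) * numDag (n - m))),
    card_univ, Fintype.card_fin] at h
  rw [h]
  refine sum_congr rfl fun m _ => ?_
  rw [nsmul_eq_mul]
  ring

theorem numDag_zero : numDag 0 = 1 :=
  Nat.card_eq_one_iff_unique.2 ⟨inferInstance, ⟨⟨fun u => u.elim0, fun u => u.elim0⟩⟩⟩

theorem stmt0 :
    numDag 0 = 1 ∧
    ∀ n : ℕ, 1 ≤ n →
      (numDag n : ℤ) = ∑ m ∈ Finset.Icc 1 n,
        (-1 : ℤ) ^ (m + 1) * (n.choose m : ℤ) * 2 ^ (m * (n - m)) * (numDag (n - m) : ℤ) := by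
  refine ⟨numDag_zero, fun n hn => ?_⟩
  have h := alternating_sum_range_choose_mul_numDag (n := n) (by omega)
  rw [range_eq_Ico, sum_eq_sum_Ico_succ_bot n.succ_pos, zero_add, Nat.succ_eq_add_one,
    Ico_add_one_right_eq_Icc] at h
  simp only [pow_zero, Nat.choose_zero_right, zero_mul, Nat.sub_zero, Nat.cast_one, one_mul] at h
  rw [eq_neg_of_add_eq_zero_left h, ← sum_neg_distrib]
  refine sum_congr rfl fun m _ => ?_
  ring
end

section
/- For 1 ≤ m ≤ n, the number of pairs (G, r) where G is a simple graph on the labeled vertex set [n] whose connected component containing the distinguished root vertex r is exactly the set {1,...,m}, equals m · c_m · 2^{C(n-m,2)}, where c_m is the number of connected graphs on m labeled vertices. -/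
/-- The number of connected simple graphs on the labeled vertex set `Fin n`. -/
noncomputable def numConn (n : ℕ) : ℕ :=
  Nat.card {G : SimpleGraph (Fin n) // G.Connected}

/-!
The pairs `(G, r)` whose root component is exactly `S` are in bijection with triples
`(H, r, K)`: a connected graph `H` on `S`, a root `r ∈ S`, and an arbitrary graph `K` on `Sᶜ`.
Indeed the component of `r` is `S` exactly when `r ∈ S`, no edge of `G` joins `S` to `Sᶜ`, and `G`
induces a connected graph on `S`; such a `G` is recovered from its restrictions to `S` and `Sᶜ`.
-/

namespace SimpleGraph

variable {V W : Type*}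

variable (V) in
def edgeSetEquiv : SimpleGraph V ≃ Set ↥(Sym2.diagSet (α := V))ᶜ where
  toFun G := Subtype.val ⁻¹' G.edgeSet
  invFun s := fromEdgeSet (Subtype.val '' s)
  left_inv G := by
    ext u v
    simp
  right_inv s := by
    ext ⟨e, he⟩
    simp

theorem natCard_simpleGraph [Finite V] :
    Nat.card (SimpleGraph V) = 2 ^ (Nat.card V).choose 2 := by
  rw [Nat.card_congr (edgeSetEquiv V), Set, Nat.card_fun, Nat.card_eq_fintype_card (α := Prop),
    Fintype.card_prop, Nat.card_coe_set_eq, Sym2.ncard_diagSet_compl]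

theorem natCard_connected_congr (e : V ≃ W) :
    Nat.card {G : SimpleGraph V // G.Connected} = Nat.card {G : SimpleGraph W // G.Connected} :=
  Nat.card_congr <| e.simpleGraph.subtypeEquiv fun G => (Iso.comap e.symm G).connected_iff.symm

theorem supp_connectedComponentMk (G : SimpleGraph V) (r : V) :
    (G.connectedComponentMk r).supp = {v | G.Reachable r v} := by
  ext v
  simp [ConnectedComponent.mem_supp_iff, ConnectedComponent.eq, reachable_comm]

theorem setOf_reachable_eq_iff {G : SimpleGraph V} {r : V} {S : Set V} :
    {v | G.Reachable r v} = S ↔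
      r ∈ S ∧ (∀ ⦃u v⦄, G.Adj u v → (u ∈ S ↔ v ∈ S)) ∧ (G.induce S).Connected := by
  constructor
  · rintro rfl
    refine ⟨Reachable.refl r, fun u v huv => ⟨fun hu => hu.trans huv.reachable,
      fun hv => hv.trans huv.symm.reachable⟩, ?_⟩
    rw [← supp_connectedComponentMk]
    exact (G.connectedComponentMk r).connected_toSimpleGraph
  · rintro ⟨hr, hS, hconn⟩
    ext v
    constructor
    · intro (hrv : G.Reachable r v)
      rw [reachable_iff_reflTransGen] at hrv
      induction hrv with
      | refl => exact hr
      | tail _ huv ih => exact (hS huv).1 ih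
    · intro hv
      exact (hconn.preconnected ⟨r, hr⟩ ⟨v, hv⟩).map (Embedding.induce S).toHom

section Split

variable {S : Set V}

theorem sup_spanningCoe_adj_mem_iff {H : SimpleGraph S} {K : SimpleGraph ↥Sᶜ} {u v : V}
    (huv : (H.spanningCoe ⊔ K.spanningCoe).Adj u v) : u ∈ S ↔ v ∈ S := by
  aesop

theorem induce_sup_spanningCoe_left (H : SimpleGraph S) (K : SimpleGraph ↥Sᶜ) :
    (H.spanningCoe ⊔ K.spanningCoe).induce S = H := by
  ext u v
  aesop

theorem induce_sup_spanningCoe_right (H : SimpleGraph S) (K : SimpleGraph ↥Sᶜ) :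
    (H.spanningCoe ⊔ K.spanningCoe).induce Sᶜ = K := by
  ext ⟨u, hu⟩ ⟨v, hv⟩
  simp only [Set.mem_compl_iff, comap_adj, Function.Embedding.subtype_apply, sup_adj, map_adj,
    Subtype.exists, exists_and_right, exists_eq_right_right, exists_eq_right] at hu hv ⊢
  grind

theorem spanningCoe_induce_sup_spanningCoe_induce_compl {G : SimpleGraph V}
    (hG : ∀ ⦃u v⦄, G.Adj u v → (u ∈ S ↔ v ∈ S)) :
    (G.induce S).spanningCoe ⊔ (G.induce Sᶜ).spanningCoe = G := by
  ext u v
  simp only [sup_adj, map_adj, comap_adj, Function.Embedding.subtype_apply, Subtype.exists,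
    exists_and_left, exists_prop, ↓existsAndEq, and_true, true_and, Set.mem_compl_iff]
  grind

variable (S) in
def rootedComponentEquiv :
    {p : SimpleGraph V × V // {v | p.1.Reachable p.2 v} = S} ≃
      {H : SimpleGraph S // H.Connected} × S × SimpleGraph ↥Sᶜ where
  toFun p :=
    have hp := setOf_reachable_eq_iff.1 p.2
    (⟨p.1.1.induce S, hp.2.2⟩, ⟨p.1.2, hp.1⟩, p.1.1.induce Sᶜ)
  invFun q :=
    ⟨(q.1.1.spanningCoe ⊔ q.2.2.spanningCoe, q.2.1), setOf_reachable_eq_iff.2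
      ⟨q.2.1.2, fun _ _ => sup_spanningCoe_adj_mem_iff,
        (induce_sup_spanningCoe_left q.1.1 q.2.2).symm ▸ q.1.2⟩⟩
  left_inv p := by
    ext : 2
    · exact spanningCoe_induce_sup_spanningCoe_induce_compl (setOf_reachable_eq_iff.1 p.2).2.1
    · rfl
  right_inv q := by
    ext : 2
    · exact induce_sup_spanningCoe_left _ _
    · rfl
    · exact induce_sup_spanningCoe_right _ _

end Split

theorem natCard_setOf_reachable_eq [Finite V] (S : Set V) :
    Nat.card {p : SimpleGraph V × V // {v | p.1.Reachable p.2 v} = S} =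
      Nat.card {H : SimpleGraph S // H.Connected} * Nat.card S * 2 ^ (Nat.card ↥Sᶜ).choose 2 := by
  rw [Nat.card_congr (rootedComponentEquiv S), Nat.card_prod, Nat.card_prod, natCard_simpleGraph,
    mul_assoc]

end SimpleGraph

theorem stmt4_general (n m : ℕ) (h2 : m ≤ n) :
    Nat.card {p : SimpleGraph (Fin n) × Fin n //
      {v : Fin n | p.1.Reachable p.2 v} = {v : Fin n | (v : ℕ) < m}}
      = m * numConn m * 2 ^ ((n - m).choose 2) := by
  set S : Set (Fin n) := {v | (v : ℕ) < m}
  have e : Fin m ≃ S := Fin.castLEquiv h2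
  have hS : Nat.card S = m := by rw [← Nat.card_congr e, Nat.card_fin]
  have hSc : Nat.card ↥Sᶜ = n - m := by
    rw [Nat.card_coe_set_eq, Set.ncard_compl, ← Nat.card_coe_set_eq, hS, Nat.card_fin]
  rw [SimpleGraph.natCard_setOf_reachable_eq, hS, hSc, numConn,
    SimpleGraph.natCard_connected_congr e, mul_comm m]

theorem stmt4 (n m : ℕ) (h1 : 1 ≤ m) (h2 : m ≤ n) :
    Nat.card {p : SimpleGraph (Fin n) × Fin n //
      {v : Fin n | p.1.Reachable p.2 v} = {v : Fin n | (v : ℕ) < m}}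
      = m * numConn m * 2 ^ ((n - m).choose 2) :=
  stmt4_general n m h2
end
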